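/- arXiv:1008.1032 — 3 statements merged into one kernel-verified Lean document; each statement's English description precedes it below -/
import Mathlib

section
/- Let (X_n, Y_n) be a sequence of pairs of real random variables and suppose: (i) E| E[exp(iλX_n) | 𝒢_n] − exp(−λ²c₂/2) | → 0 for every real λ, where Y_n is 𝒢_n-measurable for a σ-algebra 𝒢_n; and (ii) Y_n converges in distribution to Y ~ N(μ̃, σ̃²). Then (X_n, Y_n) converges jointly in distribution to (X, Y) with X ~ N(0, c₂) independent of Y; consequently X_n + Y_n ⇒ N(μ̃, c₂ + σ̃²). -/
/-!
Since `Y n` is `𝒢 n`-measurable, `exp (i φ Y n)` can be pulled out of the conditional expectation: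
`E[exp (i (l X n + φ Y n))] = E[exp (i φ Y n) · E[exp (i l X n) | 𝒢 n]]`. Replacing the conditional
characteristic function by its limit `c = exp (-l² c₂ / 2)` costs at most
`E|E[exp (i l X n) | 𝒢 n] - c|`, because `|exp (i φ Y n)| = 1`; hence the joint characteristic
function is asymptotically `c · E[exp (i φ Y n)]`, which converges by hypothesis. The statement
about `X n + Y n` is the case `l = φ = t`.
-/

open MeasureTheory Filter Topology Complex ProbabilityTheory

section

variable {Ω : Type*} {m m0 : MeasurableSpace Ω} {μ : Measure Ω}

theorem integral_mul_condExp_of_stronglyMeasurable_left {A : Type*} [NormedRing A]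
    [NormedAlgebra ℝ A] [CompleteSpace A] (hm : m ≤ m0) [SigmaFinite (μ.trim hm)]
    {f g : Ω → A} (hf : StronglyMeasurable[m] f) (hfg : Integrable (fun ω ↦ f ω * g ω) μ)
    (hg : Integrable g μ) :
    ∫ ω, f ω * g ω ∂μ = ∫ ω, f ω * μ[g|m] ω ∂μ := by
  rw [← integral_condExp hm]
  exact integral_congr_ae
    (condExp_bilin_of_stronglyMeasurable_left (ContinuousLinearMap.mul ℝ A) hf hfg hg)

variable {𝕜 : Type*} [RCLike 𝕜]

theorem norm_integral_mul_sub_const_mul_integral_le [IsFiniteMeasure μ] (hm : m ≤ m0)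
    {f g : Ω → 𝕜} (hf : StronglyMeasurable[m] f) (hf_le : ∀ ω, ‖f ω‖ ≤ 1) (hg : Integrable g μ) (c : 𝕜) :
    ‖∫ ω, f ω * g ω ∂μ - c * ∫ ω, f ω ∂μ‖ ≤ ∫ ω, ‖μ[g|m] ω - c‖ ∂μ := by
  have hf_ae : AEStronglyMeasurable f μ := (hf.mono hm).aestronglyMeasurable
  have hf_int : Integrable f μ :=
    (integrable_const (1 : ℝ)).mono' hf_ae (ae_of_all _ hf_le)
  have hdiff : Integrable (fun ω ↦ μ[g|m] ω - c) μ := integrable_condExp.sub (integrable_const c)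
  have hfce : Integrable (fun ω ↦ f ω * μ[g|m] ω) μ :=
    integrable_condExp.bdd_mul hf_ae (ae_of_all _ hf_le)
  have hsplit : ∫ ω, f ω * g ω ∂μ - c * ∫ ω, f ω ∂μ = ∫ ω, f ω * (μ[g|m] ω - c) ∂μ := by
    rw [integral_mul_condExp_of_stronglyMeasurable_left hm hf
      (hg.bdd_mul hf_ae (ae_of_all _ hf_le)) hg, ← integral_const_mul, ← integral_sub hfce
      (hf_int.const_mul c)]
    congr 1 with ω
    ring
  rw [hsplit]
  refine norm_integral_le_of_norm_le hdiff.norm (ae_of_all _ fun ω ↦ ?_)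
  calc ‖f ω * (μ[g|m] ω - c)‖ ≤ ‖f ω‖ * ‖μ[g|m] ω - c‖ := norm_mul_le _ _
    _ ≤ ‖μ[g|m] ω - c‖ := mul_le_of_le_one_left (norm_nonneg _) (hf_le ω)

-- A non-integrable `g` has the junk conditional expectation `0`, making the left side `‖c‖`.
theorem integrable_of_integral_norm_condExp_sub_lt [IsProbabilityMeasure μ] {g : Ω → 𝕜} {c : 𝕜}
    (h : ∫ ω, ‖μ[g|m] ω - c‖ ∂μ < ‖c‖) : Integrable g μ := by
  by_contra hg
  simp [condExp_of_not_integrable hg] at h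

theorem norm_integral_exp_pair_sub_le [IsFiniteMeasure μ] (hm : m ≤ m0) {X Y : Ω → ℝ}
    (hY : Measurable[m] Y) (l φ : ℝ) (hX : Integrable (fun ω ↦ exp (I * l * X ω)) μ) (c : ℂ) :
    ‖∫ ω, exp (I * (l * X ω + φ * Y ω)) ∂μ - c * ∫ ω, exp (I * φ * Y ω) ∂μ‖ ≤
      ∫ ω, ‖μ[fun ω' ↦ exp (I * l * X ω')|m] ω - c‖ ∂μ := by
  have hY_exp : StronglyMeasurable[m] fun ω ↦ exp (I * φ * Y ω) :=
    (hY.complex_ofReal.const_mul (I * φ)).cexp.stronglyMeasurable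
  have hY_exp_le (ω : Ω) : ‖exp (I * φ * Y ω)‖ ≤ 1 := by
    rw [mul_assoc, ← ofReal_mul, norm_exp_I_mul_ofReal]
  have hsplit : (fun ω ↦ exp (I * (l * X ω + φ * Y ω))) =
      fun ω ↦ exp (I * φ * Y ω) * exp (I * l * X ω) := by
    ext ω
    rw [← Complex.exp_add]
    ring_nf
  rw [hsplit]
  exact norm_integral_mul_sub_const_mul_integral_le hm hY_exp hY_exp_le hX c

end

theorem stmt_6_general {Ω : Type*} [m0 : MeasurableSpace Ω] (μ : Measure Ω) [IsProbabilityMeasure μ]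
    (X Y : ℕ → Ω → ℝ) (𝒢 : ℕ → MeasurableSpace Ω) (h𝒢 : ∀ n, 𝒢 n ≤ m0)
    (hYmeas : ∀ n, Measurable[𝒢 n] (Y n))
    (c₂ : ℝ) (muT : ℝ) (sig2 : ℝ)
    (hcond : ∀ l : ℝ,
      Tendsto (fun n => ∫ ω,
          ‖(μ[fun ω' => Complex.exp (I * l * X n ω') | 𝒢 n]) ω -
            Complex.exp (-(l ^ 2 * c₂ / 2 : ℝ))‖ ∂μ)
        atTop (𝓝 0))
    (hY : ∀ t : ℝ,
      Tendsto (fun n => ∫ ω, Complex.exp (I * t * Y n ω) ∂μ) atTop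
        (𝓝 (Complex.exp (I * t * muT - (t ^ 2 * sig2 / 2 : ℝ))))) :
    (∀ l φ : ℝ,
      Tendsto (fun n => ∫ ω, Complex.exp (I * (l * X n ω + φ * Y n ω)) ∂μ) atTop
        (𝓝 (Complex.exp (-(l ^ 2 * c₂ / 2 : ℝ)) *
          Complex.exp (I * φ * muT - (φ ^ 2 * sig2 / 2 : ℝ))))) ∧
    (∀ t : ℝ,
      Tendsto (fun n => ∫ ω, Complex.exp (I * t * (X n ω + Y n ω)) ∂μ) atTop
        (𝓝 (Complex.exp (I * t * muT - (t ^ 2 * (c₂ + sig2) / 2 : ℝ))))) := by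
  have joint (l φ : ℝ) :
      Tendsto (fun n => ∫ ω, Complex.exp (I * (l * X n ω + φ * Y n ω)) ∂μ) atTop
        (𝓝 (Complex.exp (-(l ^ 2 * c₂ / 2 : ℝ)) *
          Complex.exp (I * φ * muT - (φ ^ 2 * sig2 / 2 : ℝ)))) := by
    set c : ℂ := Complex.exp (-(l ^ 2 * c₂ / 2 : ℝ))
    have hc : 0 < ‖c‖ := norm_pos_iff.2 (Complex.exp_ne_zero _)
    have hbound : ∀ᶠ n in atTop,
        ‖∫ ω, Complex.exp (I * (l * X n ω + φ * Y n ω)) ∂μ -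
          c * ∫ ω, Complex.exp (I * φ * Y n ω) ∂μ‖ ≤
        ∫ ω, ‖(μ[fun ω' => Complex.exp (I * l * X n ω') | 𝒢 n]) ω - c‖ ∂μ := by
      filter_upwards [(hcond l).eventually (gt_mem_nhds hc)] with n hn
      exact norm_integral_exp_pair_sub_le (h𝒢 n) (hYmeas n) l φ
        (integrable_of_integral_norm_condExp_sub_lt hn) c
    simpa using (squeeze_zero_norm' hbound (hcond l)).add ((hY φ).const_mul c)
  refine ⟨joint, fun t ↦ ?_⟩
  convert joint t t using 2
  · simp only [mul_add, mul_assoc]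
  · rw [← Complex.exp_add]
    push_cast
    ring_nf

/-- Joint CLT from conditional characteristic function convergence:
if `E|E[e^{iλX_n}|𝒢_n] − e^{−λ²c₂/2}| → 0` with `Y_n` being `𝒢_n`-measurable, and
`Y_n ⇒ N(muT, σ̃²)`, then `(X_n, Y_n)` converges jointly in distribution to independent
`N(0,c₂) ⊗ N(muT,σ̃²)`, and `X_n + Y_n ⇒ N(muT, c₂ + σ̃²)` (all stated via characteristic
functions, which characterize convergence in distribution). -/
theorem stmt_6 {Ω : Type*} [m0 : MeasurableSpace Ω] (μ : Measure Ω) [IsProbabilityMeasure μ]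
    (X Y : ℕ → Ω → ℝ) (𝒢 : ℕ → MeasurableSpace Ω) (h𝒢 : ∀ n, 𝒢 n ≤ m0)
    (hYmeas : ∀ n, Measurable[𝒢 n] (Y n))
    (c₂ : ℝ) (hc₂ : 0 ≤ c₂) (muT : ℝ) (sig2 : ℝ) (hσ : 0 ≤ sig2)
    (hcond : ∀ l : ℝ,
      Tendsto (fun n => ∫ ω,
          ‖(μ[fun ω' => Complex.exp (I * l * X n ω') | 𝒢 n]) ω -
            Complex.exp (-(l ^ 2 * c₂ / 2 : ℝ))‖ ∂μ)
        atTop (𝓝 0))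
    (hY : ∀ t : ℝ,
      Tendsto (fun n => ∫ ω, Complex.exp (I * t * Y n ω) ∂μ) atTop
        (𝓝 (Complex.exp (I * t * muT - (t ^ 2 * sig2 / 2 : ℝ))))) :
    (∀ l φ : ℝ,
      Tendsto (fun n => ∫ ω, Complex.exp (I * (l * X n ω + φ * Y n ω)) ∂μ) atTop
        (𝓝 (Complex.exp (-(l ^ 2 * c₂ / 2 : ℝ)) *
          Complex.exp (I * φ * muT - (φ ^ 2 * sig2 / 2 : ℝ))))) ∧
    (∀ t : ℝ,
      Tendsto (fun n => ∫ ω, Complex.exp (I * t * (X n ω + Y n ω)) ∂μ) atTop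
        (𝓝 (Complex.exp (I * t * muT - (t ^ 2 * (c₂ + sig2) / 2 : ℝ))))) :=
  stmt_6_general (m0 := m0) μ X Y 𝒢 h𝒢 hYmeas c₂ muT sig2 hcond hY
end

section
/- Let F be a distribution function on (0,∞) with tail F̄ ∈ RV_{−1} (regularly varying of index −1). Then the function x ↦ ∫_0^x F̄(y) dy is Π-varying with auxiliary function x F̄(x); that is, for every t > 0, ( ∫_0^{tx} F̄(y) dy − ∫_0^x F̄(y) dy ) / (x F̄(x)) → log t as x → ∞. Consequently I(x) = ∫_0^x y F(dy) = ∫_0^x F̄(y) dy − x F̄(x) is also Π-varying with the same auxiliary function. -/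
/-
For `g = F̄` and `x > 0` the substitution `y = s x` gives
`(∫_0^{tx} g − ∫_0^x g) / (x g(x)) = ∫_1^t g(s x) / g(x) ds`.
The integrand tends to `s⁻¹` pointwise by regular variation, and it is bounded by
`max 1 (g(tx)/g(x))` since `g` is nonincreasing, so dominated convergence gives `log t`.
For `I`, the layer-cake formula gives `I(x) = ∫_0^x F̄ − x F̄(x)`, and `x F̄(x)` is slowly varying,
so subtracting it does not change the limit.
-/

open Filter Topology Set MeasureTheory intervalIntegral

def RegularlyVarying (g : ℝ → ℝ) (ρ : ℝ) : Prop :=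
  ∀ t : ℝ, 0 < t → Tendsto (fun x => g (t * x) / g x) atTop (𝓝 (t ^ ρ))

def PiVarying (U a : ℝ → ℝ) : Prop :=
  ∀ t : ℝ, 0 < t → Tendsto (fun x => (U (t * x) - U x) / a x) atTop (𝓝 (Real.log t))

lemma sub_integral_div_eq_integral_comp_mul {g : ℝ → ℝ}
    (hg : ∀ a b : ℝ, IntervalIntegrable g volume a b) {x : ℝ} (hx : x ≠ 0) (t c : ℝ) :
    ((∫ y in (0:ℝ)..(t * x), g y) - ∫ y in (0:ℝ)..x, g y) / (x * c) =
      ∫ s in (1:ℝ)..t, g (s * x) / c := by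
  rw [intervalIntegral.integral_div, integral_comp_mul_right g hx,
    integral_interval_sub_left (hg _ _) (hg _ _), one_mul, smul_eq_mul]
  field_simp

namespace RegularlyVarying

variable {g : ℝ → ℝ} {ρ : ℝ}

lemma mul_id (hg : RegularlyVarying g ρ) : RegularlyVarying (fun x => x * g x) (ρ + 1) := by
  intro t ht
  rw [Real.rpow_add ht, Real.rpow_one, mul_comm]
  refine ((hg t ht).const_mul t).congr' ?_
  filter_upwards [eventually_gt_atTop 0] with x hx
  field_simp

lemma tendsto_integral_comp_mul_div (hg : RegularlyVarying g ρ) (hanti : Antitone g)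
    (hpos : ∀ x, 0 < g x) {t : ℝ} (ht : 0 < t) :
    Tendsto (fun x => ∫ s in (1:ℝ)..t, g (s * x) / g x) atTop
      (𝓝 (∫ s in (1:ℝ)..t, s ^ ρ)) := by
  have hratio_lt : ∀ᶠ x in atTop, g (t * x) / g x < t ^ ρ + 1 :=
    (hg t ht).eventually_lt_const (lt_add_one _)
  refine tendsto_integral_filter_of_dominated_convergence (fun _ => max 1 (t ^ ρ + 1)) ?_ ?_
    intervalIntegrable_const ?_
  · exact Eventually.of_forall fun x =>
      ((hanti.measurable.comp (measurable_id.mul_const x)).div_const _).aestronglyMeasurable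
  · filter_upwards [eventually_gt_atTop 0, hratio_lt] with x hx hxt
    refine Eventually.of_forall fun s hs => ?_
    rw [Real.norm_of_nonneg (div_nonneg (hpos _).le (hpos _).le)]
    rcases le_or_gt 1 s with h1s | hs1
    · exact ((div_le_one (hpos x)).2 (hanti (le_mul_of_one_le_left hx.le h1s))).trans
        (le_max_left _ _)
    · have hts : t < s := (min_lt_iff.1 hs.1).resolve_left hs1.not_gt
      calc g (s * x) / g x ≤ g (t * x) / g x :=
            div_le_div_of_nonneg_right (hanti (by gcongr)) (hpos x).le
        _ ≤ _ := hxt.le.trans (le_max_right _ _)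
  · exact Eventually.of_forall fun s hs =>
      hg s ((lt_min one_pos ht).trans hs.1)

theorem piVarying_integral (hg : RegularlyVarying g (-1)) (hanti : Antitone g)
    (hpos : ∀ x, 0 < g x) : PiVarying (fun x => ∫ y in (0:ℝ)..x, g y) (fun x => x * g x) := by
  intro t ht
  have hlim := hg.tendsto_integral_comp_mul_div hanti hpos ht
  simp only [Real.rpow_neg_one, integral_inv_of_pos one_pos ht, div_one] at hlim
  refine hlim.congr' ?_
  filter_upwards [eventually_gt_atTop 0] with x hx
  exact (sub_integral_div_eq_integral_comp_mul (fun _ _ => hanti.intervalIntegrable) hx.ne' t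
    (g x)).symm

end RegularlyVarying

theorem PiVarying.sub_auxiliary {U a : ℝ → ℝ} (hU : PiVarying U a) (ha : RegularlyVarying a 0) :
    PiVarying (fun x => U x - a x) a := by
  intro t ht
  -- `a x / a x → 1` forces `a x ≠ 0` eventually.
  have ha_ne : ∀ᶠ x in atTop, a x ≠ 0 := by
    filter_upwards [(ha 1 one_pos).eventually_ne (show (1:ℝ) ^ (0:ℝ) ≠ 0 by norm_num)]
      with x hx hax
    simp [hax] at hx
  have hinc := (hU t ht).sub ((ha t ht).sub_const 1)
  rw [Real.rpow_zero, sub_self, sub_zero] at hinc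
  refine hinc.congr' ?_
  filter_upwards [ha_ne] with x hx
  field_simp
  ring

theorem StieltjesFunction.integral_Ioc_id (F : StieltjesFunction ℝ) {x : ℝ} (hx : 0 ≤ x) :
    ∫ y in Ioc (0:ℝ) x, y ∂F.measure = (∫ y in (0:ℝ)..x, (1 - F y)) - x * (1 - F x) := by
  set μ := F.measure.restrict (Ioc (0:ℝ) x) with hμ
  have hid_int : Integrable (fun y => y) μ := by
    refine Measure.integrableOn_of_bounded (M := x) (by simp [F.measure_Ioc])
      aestronglyMeasurable_id ?_
    filter_upwards [ae_restrict_mem measurableSet_Ioc] with y hy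
    rw [Real.norm_of_nonneg hy.1.le]
    exact hy.2
  have hid_nonneg : 0 ≤ᵐ[μ] fun y => y := by
    filter_upwards [ae_restrict_mem measurableSet_Ioc] with y hy
    exact hy.1.le
  have htail : ∀ r ∈ Ioi (0:ℝ),
      μ.real {y | r < y} = (Ioc 0 x).indicator (fun r => F x - F r) r := by
    intro r hr
    rw [measureReal_def, show {y : ℝ | r < y} = Ioi r from rfl, hμ,
      Measure.restrict_apply _root_.measurableSet_Ioi, inter_comm, Ioc_inter_Ioi,
      sup_eq_right.2 (le_of_lt hr), F.measure_Ioc]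
    by_cases hrx : r ≤ x
    · rw [indicator_of_mem (mem_Ioc.2 ⟨hr, hrx⟩), ENNReal.toReal_ofReal (sub_nonneg.2 (F.mono hrx))]
    · rw [indicator_of_notMem fun h => hrx h.2,
        ENNReal.ofReal_eq_zero.2 (sub_nonpos.2 (F.mono (le_of_not_ge hrx))),
        ENNReal.toReal_zero]
  have hF_int : IntervalIntegrable (fun y => F y) volume 0 x := F.mono.intervalIntegrable
  rw [hid_int.integral_eq_integral_meas_lt hid_nonneg,
    setIntegral_congr_fun _root_.measurableSet_Ioi htail, setIntegral_indicator measurableSet_Ioc,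
    inter_eq_self_of_subset_right Ioc_subset_Ioi_self,
    ← integral_of_le hx, integral_sub intervalIntegrable_const hF_int,
    integral_sub intervalIntegrable_const hF_int]
  simp only [intervalIntegral.integral_const, smul_eq_mul, sub_zero]
  ring

theorem stmt_9_general (F : StieltjesFunction ℝ) (hF1 : ∀ x, F x < 1)
    (htail : RegularlyVarying (fun x => 1 - F x) (-1)) :
    (∀ t : ℝ, 0 < t →
      Tendsto (fun x =>
          ((∫ y in (0:ℝ)..(t * x), (1 - F y)) - ∫ y in (0:ℝ)..x, (1 - F y)) /
            (x * (1 - F x)))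
        atTop (𝓝 (Real.log t))) ∧
    (∀ t : ℝ, 0 < t →
      Tendsto (fun x =>
          (((∫ y in Ioc (0:ℝ) (t * x), y ∂F.measure) -
              ∫ y in Ioc (0:ℝ) x, y ∂F.measure)) / (x * (1 - F x)))
        atTop (𝓝 (Real.log t))) := by
  have hanti : Antitone fun x => 1 - F x := fun a b hab => sub_le_sub_left (F.mono hab) 1
  have hPi := htail.piVarying_integral hanti fun x => sub_pos.2 (hF1 x)
  have hslow : RegularlyVarying (fun x => x * (1 - F x)) 0 := by
    simpa using htail.mul_id
  refine ⟨hPi, fun t ht => (hPi.sub_auxiliary hslow t ht).congr' ?_⟩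
  filter_upwards [eventually_ge_atTop 0] with x hx
  rw [F.integral_Ioc_id hx, F.integral_Ioc_id (by positivity)]

/-- de Haan's theorem: if `F̄ = 1 − F ∈ RV_{−1}`, then `x ↦ ∫_0^x F̄(y) dy` is Π-varying
with auxiliary function `x F̄(x)`, and so is `I(x) = ∫_0^x y F(dy) = ∫_0^x F̄ − x F̄(x)`. -/
theorem stmt_9 (F : StieltjesFunction ℝ) (hF0 : ∀ x ≤ 0, F x = 0) (hF1 : ∀ x, F x < 1)
    (htail : RegularlyVarying (fun x => 1 - F x) (-1)) :
    (∀ t : ℝ, 0 < t →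
      Tendsto (fun x =>
          ((∫ y in (0:ℝ)..(t * x), (1 - F y)) - ∫ y in (0:ℝ)..x, (1 - F y)) /
            (x * (1 - F x)))
        atTop (𝓝 (Real.log t))) ∧
    (∀ t : ℝ, 0 < t →
      Tendsto (fun x =>
          (((∫ y in Ioc (0:ℝ) (t * x), y ∂F.measure) -
              ∫ y in Ioc (0:ℝ) x, y ∂F.measure)) / (x * (1 - F x)))
        atTop (𝓝 (Real.log t))) :=
  stmt_9_general F hF1 htail
end

section
/- Let e : (0,∞) → ℝ be Π-varying with auxiliary function b(x)/x where b ∈ RV_1, and let R_n be random variables with R_n/n → c₁ in probability for some constant c₁ > 0. Then ( e(R_n) − e(n) ) / ( b(n)/n ) → log c₁ in probability, and consequently (R_n e(R_n) − R_n e(n)) / b(n) → c₁ log c₁ in probability. -/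
/-!
Write `R_n = t_n n` with `t_n = R_n / n → c₁` in measure. Since the Π-variation limit is uniform
on the compact neighbourhood `[c₁/2, 2c₁]` of `c₁` and `log` is continuous at `c₁`, the random
argument `t_n` may be substituted into it: off the small event `|t_n - c₁| ≥ δ` the quotient is
within `ε` of `log c₁`. The second limit is the product of the first with `t_n`.
-/

open Filter Topology Set MeasureTheory

namespace MeasureTheory.TendstoInMeasure

variable {α ι E F G : Type*} [MeasurableSpace α] {μ : Measure α} {l : Filter ι}
  [PseudoMetricSpace E] [PseudoMetricSpace F] [PseudoMetricSpace G]

lemma of_forall_dist_lt {g : ι → α → E} {c : E} {f : ι → α → F} {L : F}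
    (hg : TendstoInMeasure μ g l fun _ => c)
    (h : ∀ ε > 0, ∃ δ > 0, ∀ᶠ i in l, ∀ ω, dist (g i ω) c < δ → dist (f i ω) L < ε) :
    TendstoInMeasure μ f l fun _ => L := by
  rw [tendstoInMeasure_iff_dist] at hg ⊢
  intro ε hε
  obtain ⟨δ, hδ, hfg⟩ := h ε hε
  refine tendsto_of_tendsto_of_tendsto_of_le_of_le' tendsto_const_nhds (hg δ hδ)
    (Eventually.of_forall fun _ => zero_le) ?_
  filter_upwards [hfg] with i hi
  exact measure_mono fun ω hω => not_lt.mp fun hlt => (not_lt.mpr hω) (hi ω hlt)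

lemma comp_continuousAt {g : ι → α → E} {c : E} (hg : TendstoInMeasure μ g l fun _ => c)
    {φ : E → F} (hφ : ContinuousAt φ c) :
    TendstoInMeasure μ (fun i ω => φ (g i ω)) l fun _ => φ c := by
  refine hg.of_forall_dist_lt fun ε hε => ?_
  obtain ⟨δ, hδ, hφδ⟩ := Metric.continuousAt_iff.mp hφ ε hε
  exact ⟨δ, hδ, Eventually.of_forall fun _ _ h => hφδ h⟩

lemma comp_tendstoUniformlyOn {g : ι → α → E} {c : E} (hg : TendstoInMeasure μ g l fun _ => c)
    {Φ : ι → E → F} {φ : E → F} {s : Set E} (hs : s ∈ 𝓝 c) (hΦ : TendstoUniformlyOn Φ φ l s)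
    (hφ : ContinuousAt φ c) :
    TendstoInMeasure μ (fun i ω => Φ i (g i ω)) l fun _ => φ c := by
  refine hg.of_forall_dist_lt fun ε hε => ?_
  obtain ⟨δ₁, hδ₁, hφδ⟩ := Metric.continuousAt_iff.mp hφ (ε / 2) (half_pos hε)
  obtain ⟨δ₂, hδ₂, hball⟩ := Metric.mem_nhds_iff.mp hs
  refine ⟨min δ₁ δ₂, lt_min hδ₁ hδ₂, ?_⟩
  filter_upwards [Metric.tendstoUniformlyOn_iff.mp hΦ (ε / 2) (half_pos hε)] with i hi ω hω
  have hω₁ : dist (g i ω) c < δ₁ := hω.trans_le (min_le_left _ _)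
  have hω₂ : g i ω ∈ s := hball (hω.trans_le (min_le_right _ _))
  calc dist (Φ i (g i ω)) (φ c)
      ≤ dist (Φ i (g i ω)) (φ (g i ω)) + dist (φ (g i ω)) (φ c) := dist_triangle _ _ _
    _ < ε / 2 + ε / 2 := add_lt_add (by rw [dist_comm]; exact hi _ hω₂) (hφδ hω₁)
    _ = ε := add_halves ε

lemma prodMk {f : ι → α → E} {a : E} {g : ι → α → F} {b : F}
    (hf : TendstoInMeasure μ f l fun _ => a) (hg : TendstoInMeasure μ g l fun _ => b) :
    TendstoInMeasure μ (fun i ω => (f i ω, g i ω)) l fun _ => (a, b) := by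
  rw [tendstoInMeasure_iff_dist] at hf hg ⊢
  intro ε hε
  refine tendsto_of_tendsto_of_tendsto_of_le_of_le tendsto_const_nhds
    (by simpa using (hf ε hε).add (hg ε hε)) (fun _ => zero_le) fun i => ?_
  calc μ {ω | ε ≤ dist (f i ω, g i ω) (a, b)}
      = μ ({ω | ε ≤ dist (f i ω) a} ∪ {ω | ε ≤ dist (g i ω) b}) := by
        simp only [Prod.dist_eq, le_max_iff, ofPred_or]
    _ ≤ _ := measure_union_le _ _

lemma comp₂_continuousAt {f : ι → α → E} {a : E} {g : ι → α → F} {b : F}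
    (hf : TendstoInMeasure μ f l fun _ => a) (hg : TendstoInMeasure μ g l fun _ => b)
    {φ : E → F → G} (hφ : ContinuousAt (Function.uncurry φ) (a, b)) :
    TendstoInMeasure μ (fun i ω => φ (f i ω) (g i ω)) l fun _ => φ a b :=
  (hf.prodMk hg).comp_continuousAt hφ

lemma mul {M : Type*} [PseudoMetricSpace M] [Mul M] [ContinuousMul M]
    {f g : ι → α → M} {a b : M}
    (hf : TendstoInMeasure μ f l fun _ => a) (hg : TendstoInMeasure μ g l fun _ => b) :
    TendstoInMeasure μ (fun i ω => f i ω * g i ω) l fun _ => a * b :=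
  hf.comp₂_continuousAt hg continuous_mul.continuousAt

end MeasureTheory.TendstoInMeasure

theorem stmt_10_general (e b : ℝ → ℝ)
    (hPi : ∀ K : Set ℝ, IsCompact K → K ⊆ Ioi (0 : ℝ) →
      TendstoUniformlyOn (fun x t => (e (t * x) - e x) / (b x / x)) Real.log atTop K)
    {Ω : Type*} [MeasurableSpace Ω] (μ : Measure Ω)
    (R : ℕ → Ω → ℝ) (c₁ : ℝ) (hc₁ : 0 < c₁)
    (hR : TendstoInMeasure μ (fun n ω => R n ω / n) atTop (fun _ => c₁)) :
    TendstoInMeasure μ (fun n ω => (e (R n ω) - e n) / (b n / n)) atTop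
        (fun _ => Real.log c₁) ∧
      TendstoInMeasure μ (fun n ω => (R n ω * e (R n ω) - R n ω * e n) / b n) atTop
        (fun _ => c₁ * Real.log c₁) := by
  set K := Icc (c₁ / 2) (2 * c₁)
  have hK : K ∈ 𝓝 c₁ := Icc_mem_nhds (by linarith) (by linarith)
  have hKpos : K ⊆ Ioi 0 := fun t ht => lt_of_lt_of_le (half_pos hc₁) ht.1
  have hPiNat : TendstoUniformlyOn (fun (n : ℕ) t => (e (t * n) - e n) / (b n / n))
      Real.log atTop K :=
    fun u hu => tendsto_natCast_atTop_atTop.eventually (hPi K isCompact_Icc hKpos u hu)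
  have hn : ∀ᶠ n : ℕ in atTop, (n : ℝ) ≠ 0 :=
    (eventually_ne_atTop 0).mono fun n hn => Nat.cast_ne_zero.mpr hn
  have hlog : TendstoInMeasure μ (fun n ω => (e (R n ω) - e n) / (b n / n)) atTop
      (fun _ => Real.log c₁) := by
    refine (hR.comp_tendstoUniformlyOn hK hPiNat (Real.continuousAt_log hc₁.ne')).congr'
      ?_ EventuallyEq.rfl
    filter_upwards [hn] with n hn
    exact Eventually.of_forall fun ω => by simp only [div_mul_cancel₀ _ hn]
  refine ⟨hlog, (hR.mul hlog).congr' ?_ EventuallyEq.rfl⟩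
  filter_upwards [hn] with n hn
  refine Eventually.of_forall fun ω => ?_
  simp only [← mul_sub]
  field_simp

/-- Substitution of random arguments into a Π-varying function:
if `e` is Π-varying with auxiliary function `b(x)/x` (locally uniformly), `b ∈ RV_1`, and
`R_n/n → c₁ > 0` in probability, then `(e(R_n) − e(n))/(b(n)/n) → log c₁` and
`(R_n e(R_n) − R_n e(n))/b(n) → c₁ log c₁` in probability. -/
theorem stmt_10 (e b : ℝ → ℝ) (hbRV : RegularlyVarying b 1) (hbpos : ∀ x, 0 < x → 0 < b x)
    (hPi : ∀ K : Set ℝ, IsCompact K → K ⊆ Ioi (0 : ℝ) →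
      TendstoUniformlyOn (fun x t => (e (t * x) - e x) / (b x / x)) Real.log atTop K)
    {Ω : Type*} [MeasurableSpace Ω] (μ : Measure Ω) [IsProbabilityMeasure μ]
    (R : ℕ → Ω → ℝ) (c₁ : ℝ) (hc₁ : 0 < c₁)
    (hR : TendstoInMeasure μ (fun n ω => R n ω / n) atTop (fun _ => c₁)) :
    TendstoInMeasure μ (fun n ω => (e (R n ω) - e n) / (b n / n)) atTop
        (fun _ => Real.log c₁) ∧
      TendstoInMeasure μ (fun n ω => (R n ω * e (R n ω) - R n ω * e n) / b n) atTop
        (fun _ => c₁ * Real.log c₁) :=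
  stmt_10_general e b hPi μ R c₁ hc₁ hR
end
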